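/- arXiv:1107.2367 — 13 statements merged into one kernel-verified Lean document; each statement's English description precedes it below -/
import Mathlib

section
/- Let R be a UFD and B = [[e,f],[g,h]] ∈ M_2(R) with at least one of e−h, f, g nonzero. Let m = gcd(e−h, f, g). Then the centralizer of B in M_2(R) equals the set of matrices of the form m⁻¹·w·[[e−h,f],[g,0]] + v·E, where v, w range over those elements of R for which m divides w·(e−h), w·f, and w·g (equivalently, such that the matrix m⁻¹·w·B' has entries in R), and m⁻¹ denotes the inverse of m in the field of fractions of R. -/
/-!
A matrix `A = [[a, b], [c, d]]` commutes with `B = [[e, f], [g, h]]` iff it commutes with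
`B - h • 1 = [[e - h, f], [g, 0]]`, i.e. iff the cross product of `(a - d, b, c)` and
`(e - h, f, g)` vanishes. Dividing `(e - h, f, g)` by its gcd `m` leaves a vector whose entries have
no common non-unit divisor, and over a GCD domain every vector with vanishing cross product with
such a vector is an `R`-multiple `w` of it. Thus `m • (A - d • 1) = w • (B - h • 1)`, which is the
claimed shape with `v = d`; conversely every matrix of that shape commutes with `B` over the
fraction field, hence over `R`.
-/

theorem dvd_of_dvd_mul_of_dvd_mul {α : Type*} [CommMonoidWithZero α] [IsGCDMonoid α]
    {x y z t : α} (hcop : ∀ d, d ∣ x → d ∣ y → d ∣ z → IsUnit d)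
    (hy : x ∣ y * t) (hz : x ∣ z * t) : x ∣ t := by
  obtain ⟨_⟩ := ‹IsGCDMonoid α›
  have hrel : IsRelPrime x (gcd y z) := fun d hx hyz =>
    hcop d hx (hyz.trans (gcd_dvd_left y z)) (hyz.trans (gcd_dvd_right y z))
  exact hrel.dvd_of_dvd_mul_left ((dvd_gcd hy hz).trans (gcd_mul_right' t y z).dvd)

section GCDDomain

variable {R : Type*} [CommRing R] [IsDomain R] [IsGCDMonoid R]

theorem exists_eq_mul_of_mul_eq_mul_of_ne_zero {x y z p q r : R}
    (hcop : ∀ d, d ∣ x → d ∣ y → d ∣ z → IsUnit d) (hx : x ≠ 0)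
    (hxy : x * q = y * p) (hxz : x * r = z * p) : ∃ w, p = x * w ∧ q = y * w ∧ r = z * w := by
  obtain ⟨w, rfl⟩ : x ∣ p := dvd_of_dvd_mul_of_dvd_mul hcop ⟨q, hxy.symm⟩ ⟨r, hxz.symm⟩
  refine ⟨w, rfl, mul_left_cancel₀ hx ?_, mul_left_cancel₀ hx ?_⟩
  · rw [hxy]; ring
  · rw [hxz]; ring

theorem exists_eq_mul_of_cross_eq_zero {x y z p q r : R}
    (hcop : ∀ d, d ∣ x → d ∣ y → d ∣ z → IsUnit d) (hne : x ≠ 0 ∨ y ≠ 0 ∨ z ≠ 0)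
    (hxy : x * q = y * p) (hxz : x * r = z * p) (hyz : y * r = z * q) :
    ∃ w, p = x * w ∧ q = y * w ∧ r = z * w := by
  rcases hne with hx | hy | hz
  · exact exists_eq_mul_of_mul_eq_mul_of_ne_zero hcop hx hxy hxz
  · obtain ⟨w, hq, hp, hr⟩ := exists_eq_mul_of_mul_eq_mul_of_ne_zero
      (fun d hy hx hz => hcop d hx hy hz) hy hxy.symm hyz
    exact ⟨w, hp, hq, hr⟩
  · obtain ⟨w, hr, hp, hq⟩ := exists_eq_mul_of_mul_eq_mul_of_ne_zero
      (fun d hz hx hy => hcop d hx hy hz) hz hxz.symm hyz.symm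
    exact ⟨w, hp, hq, hr⟩

theorem exists_mul_eq_mul_of_cross_eq_zero {x y z m p q r : R} (hm : m ≠ 0)
    (hdvd : m ∣ x ∧ m ∣ y ∧ m ∣ z) (hgcd : ∀ d, d ∣ x → d ∣ y → d ∣ z → d ∣ m)
    (hxy : x * q = y * p) (hxz : x * r = z * p) (hyz : y * r = z * q) :
    ∃ w, m * p = x * w ∧ m * q = y * w ∧ m * r = z * w := by
  obtain ⟨⟨x', rfl⟩, ⟨y', rfl⟩, ⟨z', rfl⟩⟩ := hdvd
  have hcop : ∀ d, d ∣ x' → d ∣ y' → d ∣ z' → IsUnit d := fun d hx hy hz =>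
    isUnit_of_dvd_one <| (mul_dvd_mul_iff_left hm).mp <| by
      simpa using hgcd (m * d) (mul_dvd_mul_left m hx) (mul_dvd_mul_left m hy)
        (mul_dvd_mul_left m hz)
  have hne : x' ≠ 0 ∨ y' ≠ 0 ∨ z' ≠ 0 := by
    by_contra! h
    obtain ⟨rfl, rfl, rfl⟩ := h
    exact hm (zero_dvd_iff.mp (hgcd 0 (by simp) (by simp) (by simp)))
  obtain ⟨w, hp, hq, hr⟩ := exists_eq_mul_of_cross_eq_zero hcop hne
    (mul_left_cancel₀ hm (by linear_combination hxy) : x' * q = y' * p)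
    (mul_left_cancel₀ hm (by linear_combination hxz) : x' * r = z' * p)
    (mul_left_cancel₀ hm (by linear_combination hyz) : y' * r = z' * q)
  exact ⟨w, by rw [hp]; ring, by rw [hq]; ring, by rw [hr]; ring⟩

end GCDDomain

namespace Matrix

variable {R : Type*} [CommRing R]

theorem commute_fin_two_iff (A : Matrix (Fin 2) (Fin 2) R) (e f g h : R) :
    Commute A !![e, f; g, h] ↔
      (e - h) * A 0 1 = f * (A 0 0 - A 1 1) ∧ (e - h) * A 1 0 = g * (A 0 0 - A 1 1) ∧
        f * A 1 0 = g * A 0 1 := by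
  rw [A.eta_fin_two]
  simp only [Commute, SemiconjBy, mul_fin_two, of_apply, cons_val', cons_val_zero, cons_val_one,
    empty_val', cons_val_fin_one, ← Matrix.ext_iff, Fin.forall_fin_two]
  constructor
  · rintro ⟨⟨h00, h01⟩, h10, -⟩
    exact ⟨by linear_combination -h01, by linear_combination h10, by linear_combination -h00⟩
  · rintro ⟨h01, h10, h00⟩
    exact ⟨⟨by linear_combination -h00, by linear_combination -h01⟩, by linear_combination h10,
      by linear_combination h00⟩

theorem commute_smul_add_smul_one_fin_two (c v e f g h : R) :
    Commute (c • !![e - h, f; g, 0] + v • 1) !![e, f; g, h] := by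
  have hB : !![e - h, f; g, 0] = !![e, f; g, h] - h • 1 := by
    ext i j; fin_cases i <;> fin_cases j <;> simp
  rw [hB]
  exact (((Commute.refl _).sub_left ((Commute.one_left _).smul_left h)).smul_left c).add_left
    ((Commute.one_left _).smul_left v)

theorem commute_map_iff {n S : Type*} [Fintype n] [DecidableEq n] [Semiring S] {φ : R →+* S}
    (hφ : Function.Injective φ) {A B : Matrix n n R} :
    Commute (A.map φ) (B.map φ) ↔ Commute A B := by
  simp only [Commute, SemiconjBy, ← Matrix.map_mul, (Matrix.map_injective hφ).eq_iff]

end Matrix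

theorem stmt3 {R : Type*} [CommRing R] [IsDomain R] [UniqueFactorizationMonoid R]
    (e f g h m : R) (hne : e - h ≠ 0 ∨ f ≠ 0 ∨ g ≠ 0)
    (hmdvd : m ∣ e - h ∧ m ∣ f ∧ m ∣ g)
    (hgcd : ∀ d : R, d ∣ e - h → d ∣ f → d ∣ g → d ∣ m) :
    {A : Matrix (Fin 2) (Fin 2) R | A * !![e, f; g, h] = !![e, f; g, h] * A} =
      {A : Matrix (Fin 2) (Fin 2) R | ∃ v w : R,
        m ∣ w * (e - h) ∧ m ∣ w * f ∧ m ∣ w * g ∧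
        A.map (algebraMap R (FractionRing R)) =
          (algebraMap R (FractionRing R) m)⁻¹ •
            (algebraMap R (FractionRing R) w •
              !![algebraMap R (FractionRing R) (e - h), algebraMap R (FractionRing R) f;
                 algebraMap R (FractionRing R) g, 0]) +
          algebraMap R (FractionRing R) v • (1 : Matrix (Fin 2) (Fin 2) (FractionRing R))} := by
  set φ := algebraMap R (FractionRing R)
  have hm : m ≠ 0 := by
    rintro rfl
    simp only [zero_dvd_iff] at hmdvd
    tauto
  ext A
  constructor
  · intro hA
    obtain ⟨h01, h10, h00⟩ := (Matrix.commute_fin_two_iff A e f g h).mp hA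
    obtain ⟨w, hp, hq, hr⟩ := exists_mul_eq_mul_of_cross_eq_zero hm hmdvd hgcd h01 h10 h00
    refine ⟨A 1 1, w, Dvd.intro _ (hp.trans (mul_comm _ _)), Dvd.intro _ (hq.trans (mul_comm _ _)),
      Dvd.intro _ (hr.trans (mul_comm _ _)), ?_⟩
    have hdiv {a b : R} (hab : m * a = b * w) : φ a = (φ m)⁻¹ * (φ w * φ b) := by
      rw [eq_inv_mul_iff_mul_eq₀ ((map_ne_zero_iff φ (IsFractionRing.injective R _)).mpr hm),
        ← map_mul, ← map_mul, hab, mul_comm]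
    ext i j
    fin_cases i <;> fin_cases j
    · simpa using congrArg (· + φ (A 1 1)) (hdiv hp)
    · simpa using hdiv hq
    · simpa using hdiv hr
    · simp
  · rintro ⟨v, w, -, -, -, hA⟩
    refine (Matrix.commute_map_iff (IsFractionRing.injective R (FractionRing R))).mp ?_
    rw [hA, smul_smul, map_sub]
    convert Matrix.commute_smul_add_smul_one_fin_two _ _ _ _ _ (φ h)
    exact Matrix.eta_fin_two _
end

section
/- Let θ: R → S be a surjective ring homomorphism of commutative rings, Θ: M_n(R) → M_n(S) the induced map on matrices, and B = [b_{ij}] ∈ M_n(R). Define A_{ij} = (⋂_{k≠j} ann_S(θ(b_{jk}))) ∩ (⋂_{k≠i} ann_S(θ(b_{ki}))) ∩ ann_S(θ(b_{ii}) − θ(b_{jj})). Then every matrix of the form Θ(C) + D, with C in the centralizer of B in M_n(R) and D = [d_{ij}] satisfying d_{ij} ∈ A_{ij} for all i,j, lies in the centralizer of Θ(B) in M_n(S). -/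
theorem stmt6 {R S : Type*} [CommRing R] [CommRing S] {n : ℕ}
    (θ : R →+* S) (hθ : Function.Surjective θ)
    (B : Matrix (Fin n) (Fin n) R)
    (C : Matrix (Fin n) (Fin n) R) (hC : C * B = B * C)
    (D : Matrix (Fin n) (Fin n) S)
    (hD : ∀ i j : Fin n,
      (∀ k : Fin n, k ≠ j → θ (B j k) * D i j = 0) ∧
      (∀ k : Fin n, k ≠ i → θ (B k i) * D i j = 0) ∧
      (θ (B i i) - θ (B j j)) * D i j = 0) :
    (C.map θ + D) * B.map θ = B.map θ * (C.map θ + D) := by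
  have h1 : C.map θ * B.map θ = B.map θ * C.map θ := by
    rw [← Matrix.map_mul, ← Matrix.map_mul, hC]
  have h2 : D * B.map θ = B.map θ * D := by
    ext i j
    rw [Matrix.mul_apply, Matrix.mul_apply]
    have hl : (∑ k, D i k * (B.map θ) k j) = D i j * θ (B j j) := by
      refine Finset.sum_eq_single j (fun k _ hk => ?_) (by simp)
      rw [Matrix.map_apply, mul_comm]
      exact (hD i k).1 j (fun h => hk (h ▸ rfl))
    have hr : (∑ k, (B.map θ) i k * D k j) = θ (B i i) * D i j := by
      refine Finset.sum_eq_single i (fun k _ hk => ?_) (by simp)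
      rw [Matrix.map_apply]
      exact (hD k j).2.1 i (fun h => hk (h ▸ rfl))
    rw [hl, hr, mul_comm (D i j)]
    exact (sub_eq_zero.mp (by rw [← sub_mul]; exact (hD i j).2.2)).symm
  rw [Matrix.add_mul, Matrix.mul_add, h1, h2]
end

section
/- Let R be a UFD, I a nonzero ideal of R with k = gcd(I) ≠ 0, and b ∈ R. If gcd(b,k) is not a unit, then the image of b in R/I is a zero divisor (or zero). -/
theorem stmt7 {R : Type*} [CommRing R] [IsDomain R] [UniqueFactorizationMonoid R]
    (I : Ideal R) (hI : I ≠ ⊥) (k : R) (hk0 : k ≠ 0)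
    (hk : (∀ a ∈ I, k ∣ a) ∧ ∀ d : R, (∀ a ∈ I, d ∣ a) → d ∣ k)
    (b : R) (hbk : ∃ d : R, ¬ IsUnit d ∧ d ∣ b ∧ d ∣ k) :
    ∃ t : R ⧸ I, t ≠ 0 ∧ (Ideal.Quotient.mk I b) * t = 0 := by
  obtain ⟨d, hdu, hdb, hdk⟩ := hbk
  have hd0 : d ≠ 0 := by rintro rfl; exact hk0 (zero_dvd_iff.mp hdk)
  obtain ⟨p, hpi, hpd⟩ := WfDvdMonoid.exists_irreducible_factor hdu hd0
  have hp : Prime p := UniqueFactorizationMonoid.irreducible_iff_prime.mp hpi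
  have hpb : p ∣ b := hpd.trans hdb
  have hpk : p ∣ k := hpd.trans hdk
  obtain ⟨a0, ha0I, ha00⟩ := Submodule.exists_mem_ne_zero_of_ne_bot hI
  have key : ∃ t : R, t ∉ I ∧ p * t ∈ I := by
    by_contra hcon
    push_neg at hcon
    have step : ∀ n : ℕ, ∃ t ∈ I, a0 = p ^ n * t := by
      intro n
      induction n with
      | zero => exact ⟨a0, ha0I, by ring⟩
      | succ m ih =>
        obtain ⟨t, htI, hteq⟩ := ih
        obtain ⟨s, rfl⟩ := (hpk.trans (hk.1 t htI))
        have hsI : s ∈ I := by by_contra h; exact hcon s h htI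
        exact ⟨s, hsI, by rw [hteq]; ring⟩
    obtain ⟨n, c, hc, hceq⟩ := WfDvdMonoid.max_power_factor ha00 hp.irreducible
    obtain ⟨t, htI, hteq⟩ := step (n + 1)
    apply hc
    have h2 : p ^ n * c = p ^ n * (p * t) := by rw [← hceq, hteq]; ring
    exact ⟨t, mul_left_cancel₀ (pow_ne_zero n hp.ne_zero) h2⟩
  obtain ⟨t, htI, hptI⟩ := key
  refine ⟨Ideal.Quotient.mk I t, ?_, ?_⟩
  · simpa [Ideal.Quotient.eq_zero_iff_mem] using htI
  · rw [← map_mul, Ideal.Quotient.eq_zero_iff_mem]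
    obtain ⟨b', rfl⟩ := hpb
    have h3 : p * b' * t = b' * (p * t) := by ring
    rw [h3]
    exact I.mul_mem_left b' hptI
end

section
/- Let R be a UFD and I a nonzero ideal of R with k = gcd(I) ≠ 0. Then every element of R/I has an I-pre-image, i.e., for every b̂ ∈ R/I there exist r, δ ∈ R with r·δ ≡ b̂ modulo I, gcd(r,k) = 1, and (δ = 0 or δ divides k). -/
/-!
Write `k = δ k₁` and `b = δ r₀` with `δ` a greatest common divisor of `b` and `k`, so that `r₀` and
`k₁` are coprime. By prime avoidance, the ideal `(I : k)` lies in no prime `(p)` with `p ∣ k`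
(otherwise `k p` would be a common divisor of `I`), so it contains some `m` coprime to `k`. Then
`(r₀ + x k₁ m) δ ≡ b` modulo `k m ∈ I` for every `x`, and `x` can be chosen so that
`r₀ + x k₁ m` is coprime to `k`.
-/

open UniqueFactorizationMonoid

theorem isRelPrime_iff_forall_mem_factors {R : Type*} [CommMonoidWithZero R]
    [UniqueFactorizationMonoid R] {m k : R} (hk : k ≠ 0) :
    IsRelPrime m k ↔ ∀ p ∈ factors k, ¬p ∣ m := by
  refine ⟨fun h p hp hpm ↦ (prime_of_factor p hp).not_isUnit (h hpm (dvd_of_mem_factors hp)),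
    fun h ↦ WfDvdMonoid.isRelPrime_of_no_irreducible_factors (fun h0 ↦ hk h0.2) ?_⟩
  intro z hz hzm hzk
  obtain ⟨q, hq, hzq⟩ := exists_mem_factors_of_dvd hk hz hzk
  exact h q hq (hzq.symm.dvd.trans hzm)

section

variable {R : Type*} [CommRing R] [IsDomain R]

theorem Ideal.colon_singleton_not_le_span_singleton {I : Ideal R} {k p : R} (hk0 : k ≠ 0)
    (hdvd : ∀ a ∈ I, k ∣ a) (hgcd : ∀ d : R, (∀ a ∈ I, d ∣ a) → d ∣ k) (hp : ¬IsUnit p) :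
    ¬I.colon {k} ≤ Ideal.span {p} := by
  intro hle
  have hkp : ∀ a ∈ I, k * p ∣ a := by
    intro a ha
    obtain ⟨m, rfl⟩ := hdvd a ha
    have hm : m ∈ I.colon {k} := Submodule.mem_colon_singleton.mpr (by rwa [smul_eq_mul, mul_comm])
    exact mul_dvd_mul_left k (Ideal.mem_span_singleton.mp (hle hm))
  obtain ⟨u, hu⟩ := hgcd _ hkp
  exact hp (IsUnit.of_mul_eq_one u (mul_left_cancel₀ hk0 (by rw [mul_one, ← mul_assoc, ← hu])))

variable [UniqueFactorizationMonoid R]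

theorem Ideal.exists_mul_mem_isRelPrime_of_gcd {I : Ideal R} {k : R} (hk0 : k ≠ 0)
    (hdvd : ∀ a ∈ I, k ∣ a) (hgcd : ∀ d : R, (∀ a ∈ I, d ∣ a) → d ∣ k) :
    ∃ m : R, k * m ∈ I ∧ IsRelPrime m k := by
  classical
  have hprime : ∀ p ∈ (factors k).toFinset, Prime p :=
    fun p hp ↦ prime_of_factor p (Multiset.mem_toFinset.mp hp)
  have hnot : ¬(I.colon {k} : Set R) ⊆ ⋃ p ∈ ((factors k).toFinset : Set R), Ideal.span {p} := by
    rw [Ideal.subset_union_prime k k fun p hp _ _ ↦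
      (Ideal.span_singleton_prime (hprime p hp).ne_zero).mpr (hprime p hp)]
    rintro ⟨p, hp, hle⟩
    exact Ideal.colon_singleton_not_le_span_singleton hk0 hdvd hgcd (hprime p hp).not_isUnit hle
  obtain ⟨m, hmk, hm⟩ := Set.not_subset.mp hnot
  refine ⟨m, by simpa [mul_comm] using Submodule.mem_colon_singleton.mp hmk,
    (isRelPrime_iff_forall_mem_factors hk0).mpr fun p hp hpm ↦ ?_⟩
  exact hm (Set.mem_biUnion (Multiset.mem_toFinset.mpr hp) (Ideal.mem_span_singleton.mpr hpm))

theorem exists_isRelPrime_add_mul {a n c : R} (hc : c ≠ 0)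
    (h : ∀ d : R, d ∣ a → d ∣ n → d ∣ c → IsUnit d) :
    ∃ x : R, IsRelPrime (a + x * n) c := by
  classical
  -- every prime factor of `c` divides exactly one of `a` and `x`
  set x := ((factors c).filter (¬· ∣ a)).prod
  refine ⟨x, (isRelPrime_iff_forall_mem_factors hc).mpr fun p hp hpr ↦ ?_⟩
  have hprime := prime_of_factor p hp
  by_cases hpa : p ∣ a
  · have hpxn : p ∣ x * n := (dvd_add_right hpa).mp hpr
    rcases hprime.dvd_or_dvd hpxn with hpx | hpn
    · obtain ⟨q, hq, hpq⟩ := hprime.exists_mem_multiset_dvd hpx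
      rw [Multiset.mem_filter] at hq
      exact hq.2 ((hprime.associated_of_dvd (prime_of_factor q hq.1) hpq).symm.dvd.trans hpa)
    · exact hprime.not_isUnit (h p hpa hpn (dvd_of_mem_factors hp))
  · have hpx : p ∣ x := Multiset.dvd_prod (Multiset.mem_filter.mpr ⟨hp, hpa⟩)
    exact hpa ((dvd_add_left (dvd_mul_of_dvd_left hpx n)).mp hpr)

end

theorem stmt9_general {R : Type*} [CommRing R] [IsDomain R] [UniqueFactorizationMonoid R]
    (I : Ideal R) (k : R) (hk0 : k ≠ 0)
    (hk : (∀ a ∈ I, k ∣ a) ∧ ∀ d : R, (∀ a ∈ I, d ∣ a) → d ∣ k)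
    (bhat : R ⧸ I) :
    ∃ r δ : R, Ideal.Quotient.mk I (r * δ) = bhat ∧
      (∀ d : R, d ∣ r → d ∣ k → IsUnit d) ∧ (δ = 0 ∨ δ ∣ k) := by
  obtain ⟨b, rfl⟩ := Ideal.Quotient.mk_surjective bhat
  obtain ⟨m, hmI, hm⟩ := Ideal.exists_mul_mem_isRelPrime_of_gcd hk0 hk.1 hk.2
  obtain ⟨r₀, k₁, δ, hr₀k₁, rfl, rfl⟩ := exists_reduced_factors' b k hk0
  obtain ⟨x, hx⟩ := exists_isRelPrime_add_mul (a := r₀) (n := k₁ * m) hk0 fun d hdr hdn hdk ↦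
    hr₀k₁ hdr ((hm.symm.of_dvd_left hdk).dvd_of_dvd_mul_right hdn)
  refine ⟨r₀ + x * (k₁ * m), δ, Ideal.Quotient.eq.mpr ?_, fun _ ↦ @hx _, Or.inr (dvd_mul_right δ k₁)⟩
  have hdiff : (r₀ + x * (k₁ * m)) * δ - δ * r₀ = x * (δ * k₁ * m) := by ring
  exact hdiff ▸ I.mul_mem_left x hmI

theorem stmt9 {R : Type*} [CommRing R] [IsDomain R] [UniqueFactorizationMonoid R]
    (I : Ideal R) (hI : I ≠ ⊥) (k : R) (hk0 : k ≠ 0)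
    (hk : (∀ a ∈ I, k ∣ a) ∧ ∀ d : R, (∀ a ∈ I, d ∣ a) → d ∣ k)
    (bhat : R ⧸ I) :
    ∃ r δ : R, Ideal.Quotient.mk I (r * δ) = bhat ∧
      (∀ d : R, d ∣ r → d ∣ k → IsUnit d) ∧ (δ = 0 ∨ δ ∣ k) :=
  stmt9_general I k hk0 hk bhat
end

section
/- Let R be a UFD, I a nonzero ideal with k = gcd(I) ≠ 0, and b̂ ∈ R/I nonzero with pre-image b. Then δ ∈ R is the divisor part of some I-pre-image of b̂ if and only if δ is a greatest common divisor of b and k. In particular, the divisor parts of all I-pre-images of b̂ are associates. -/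
/-!
If `δ` is a gcd of `b = δ r₀` and `k = δ m`, every pre-image `r` of `r₀` modulo `I : δ` has
`r δ ≡ b`, so it suffices to find one coprime to `k`. This is done prime by prime of `k`: for a
prime `p ∣ r₀` we have `p ∤ m`, and since `gcd(I) = k` there is `w` with `w k ∈ I` and `p ∤ w`,
so `r₀ + m w` is a pre-image not divisible by `p`; a Chinese-remainder style induction over the
prime factors of `k` combines these. Conversely, from `r δ ≡ b` with `r` coprime to `k`, every
common divisor of `b` and `k` divides `r δ`, hence `δ`.
-/

open UniqueFactorizationMonoid

def IsGCD {α : Type*} [Monoid α] (d a b : α) : Prop :=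
  d ∣ a ∧ d ∣ b ∧ ∀ e : α, e ∣ a → e ∣ b → e ∣ d

theorem isGCD_of_mk_mul_eq {R : Type*} [CommRing R] [DecompositionMonoid R] {I : Ideal R}
    {k b r δ : R} (hkI : ∀ a ∈ I, k ∣ a) (hb : Ideal.Quotient.mk I b ≠ 0)
    (h : Ideal.Quotient.mk I (r * δ) = Ideal.Quotient.mk I b) (hr : IsRelPrime r k)
    (hδ : δ = 0 ∨ δ ∣ k) : IsGCD δ b k := by
  have hδk : δ ∣ k := hδ.resolve_left fun h0 => hb (by rw [← h, h0, mul_zero, map_zero])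
  have hkr : k ∣ r * δ - b := hkI _ (Ideal.Quotient.eq.mp h)
  have hb_eq : b = r * δ - (r * δ - b) := by ring
  refine ⟨hb_eq ▸ dvd_sub (dvd_mul_left δ r) (hδk.trans hkr), hδk, fun d hdb hdk => ?_⟩
  have hdr : d ∣ r * δ := by
    rw [← sub_add_cancel (r * δ) b]
    exact dvd_add (hdk.trans hkr) hdb
  exact (hr.of_dvd_right hdk).symm.dvd_of_dvd_mul_left hdr

theorem exists_mem_colon_singleton_not_dvd {R : Type*} [CommRing R] [IsDomain R] {I : Ideal R}
    {k : R} (hk0 : k ≠ 0) (hkI : ∀ a ∈ I, k ∣ a) (hk : ∀ d : R, (∀ a ∈ I, d ∣ a) → d ∣ k)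
    {p : R} (hp : ¬IsUnit p) :
    ∃ w ∈ I.colon {k}, ¬p ∣ w := by
  by_contra! hcon
  have hpk : p * k ∣ k := hk _ fun a ha => by
    obtain ⟨v, rfl⟩ := hkI a ha
    rw [mul_comm k v] at ha ⊢
    exact mul_dvd_mul_right (hcon v (Submodule.mem_colon_singleton.mpr ha)) k
  exact hp (isUnit_of_dvd_one ((mul_dvd_mul_iff_right hk0).mp (by rwa [one_mul])))

section UniqueFactorization

variable {R : Type*} [CommRing R] [IsDomain R] [UniqueFactorizationMonoid R]

theorem exists_isRelPrime_add_mem {J : Ideal R} {a x : R} (hx : x ≠ 0)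
    (hJ : ∀ p : R, Prime p → p ∣ x → ∃ j ∈ J, ¬p ∣ a + j) : ∃ j ∈ J, IsRelPrime (a + j) x := by
  induction x using induction_on_prime with
  | h₁ => exact absurd rfl hx
  | h₂ u hu => exact ⟨0, J.zero_mem, fun d _ hd => isUnit_of_dvd_unit hd hu⟩
  | h₃ x p hx0 hp ih =>
    obtain ⟨j, hjJ, hj⟩ := ih hx0 fun q hq hqx => hJ q hq (dvd_mul_of_dvd_right hqx p)
    obtain ⟨j₁, hj₁J, hpj₁⟩ := hJ p hp (dvd_mul_right p x)
    by_cases hpj : p ∣ a + j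
    · have hpx : ¬p ∣ x := fun h => hp.not_isUnit (hj hpj h)
      refine ⟨j + x * (j₁ - j), J.add_mem hjJ (J.mul_mem_left x (J.sub_mem hj₁J hjJ)), ?_⟩
      -- modulo `p` the new element is `x (a + j₁)`, and modulo `x` it is still `a + j`
      have hsplit : a + (j + x * (j₁ - j)) = a + j + x * ((a + j₁) - (a + j)) := by ring
      rw [hsplit]
      refine IsRelPrime.mul_right (hp.irreducible.isRelPrime_iff_not_dvd.mpr fun hp' => ?_).symm
        (IsRelPrime.of_add_mul_left_left (z := -((a + j₁) - (a + j))) ?_)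
      · rcases hp.dvd_mul.mp ((dvd_add_right hpj).mp hp') with h | h
        · exact hpx h
        · exact hpj₁ ((dvd_sub_left hpj).mp h)
      · rwa [mul_neg, add_neg_cancel_right]
    · exact ⟨j, hjJ, (hp.irreducible.isRelPrime_iff_not_dvd.mpr hpj).symm.mul_right hj⟩

theorem exists_isRelPrime_mk_mul_eq_of_isGCD {I : Ideal R} {k b δ : R} (hk0 : k ≠ 0)
    (hkI : ∀ a ∈ I, k ∣ a) (hk : ∀ d : R, (∀ a ∈ I, d ∣ a) → d ∣ k) (hδ : IsGCD δ b k) :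
    ∃ r : R, Ideal.Quotient.mk I (r * δ) = Ideal.Quotient.mk I b ∧ IsRelPrime r k := by
  obtain ⟨⟨r₀, rfl⟩, ⟨m, rfl⟩, hgcd⟩ := hδ
  have hδ0 : δ ≠ 0 := left_ne_zero_of_mul hk0
  have hcop : IsRelPrime r₀ m := fun d hdr hdm => isUnit_of_dvd_one <|
    (mul_dvd_mul_iff_left hδ0).mp <| by
      rw [mul_one]
      exact hgcd _ (mul_dvd_mul_left δ hdr) (mul_dvd_mul_left δ hdm)
  obtain ⟨j, hj, hrel⟩ := exists_isRelPrime_add_mem (J := I.colon {δ}) (a := r₀) hk0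
    fun p hp _ => by
      by_cases hpr : p ∣ r₀
      · obtain ⟨w, hw, hpw⟩ := exists_mem_colon_singleton_not_dvd hk0 hkI hk hp.not_isUnit
        refine ⟨m * w, Submodule.mem_colon_singleton.mpr ?_, fun h => ?_⟩
        · simpa only [smul_eq_mul, mul_comm, mul_left_comm] using
            Submodule.mem_colon_singleton.mp hw
        · rcases hp.dvd_mul.mp ((dvd_add_right hpr).mp h) with hpm | hpw'
          · exact hp.not_isUnit (hcop hpr hpm)
          · exact hpw hpw'
      · exact ⟨0, Submodule.zero_mem _, by rwa [add_zero]⟩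
  refine ⟨r₀ + j, Ideal.Quotient.eq.mpr ?_, hrel⟩
  simpa only [add_mul, mul_comm δ r₀, add_sub_cancel_left, smul_eq_mul] using
    Submodule.mem_colon_singleton.mp hj

end UniqueFactorization

theorem stmt10_general {R : Type*} [CommRing R] [IsDomain R] [UniqueFactorizationMonoid R]
    (I : Ideal R) (k : R) (hk0 : k ≠ 0)
    (hk : (∀ a ∈ I, k ∣ a) ∧ ∀ d : R, (∀ a ∈ I, d ∣ a) → d ∣ k)
    (b : R) (hb : Ideal.Quotient.mk I b ≠ 0) (δ : R) :
    (∃ r : R, Ideal.Quotient.mk I (r * δ) = Ideal.Quotient.mk I b ∧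
        (∀ d : R, d ∣ r → d ∣ k → IsUnit d) ∧ (δ = 0 ∨ δ ∣ k)) ↔
      (δ ∣ b ∧ δ ∣ k ∧ ∀ d : R, d ∣ b → d ∣ k → d ∣ δ) := by
  obtain ⟨hkI, hk⟩ := hk
  constructor
  · rintro ⟨r, h, hr, hδ⟩
    exact isGCD_of_mk_mul_eq hkI hb h hr hδ
  · intro hδ
    obtain ⟨r, h, hr⟩ := exists_isRelPrime_mk_mul_eq_of_isGCD hk0 hkI hk hδ
    exact ⟨r, h, hr, Or.inr hδ.2.1⟩

theorem stmt10 {R : Type*} [CommRing R] [IsDomain R] [UniqueFactorizationMonoid R]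
    (I : Ideal R) (hI : I ≠ ⊥) (k : R) (hk0 : k ≠ 0)
    (hk : (∀ a ∈ I, k ∣ a) ∧ ∀ d : R, (∀ a ∈ I, d ∣ a) → d ∣ k)
    (b : R) (hb : Ideal.Quotient.mk I b ≠ 0) (δ : R) :
    (∃ r : R, Ideal.Quotient.mk I (r * δ) = Ideal.Quotient.mk I b ∧
        (∀ d : R, d ∣ r → d ∣ k → IsUnit d) ∧ (δ = 0 ∨ δ ∣ k)) ↔
      (δ ∣ b ∧ δ ∣ k ∧ ∀ d : R, d ∣ b → d ∣ k → d ∣ δ) :=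
  stmt10_general I k hk0 hk b hb δ
end

section
/- Let R be a UFD, I a nonzero ideal with k = gcd(I) ≠ 0, and b̂ ∈ R/I nonzero with pre-image b satisfying gcd(b,k) = 1. Then b̂ is I-invertible if and only if b̂ is invertible in R/I. -/
theorem stmt11 {R : Type*} [CommRing R] [IsDomain R] [UniqueFactorizationMonoid R]
    (I : Ideal R) (hI : I ≠ ⊥) (k : R) (hk0 : k ≠ 0)
    (hk : (∀ a ∈ I, k ∣ a) ∧ ∀ d : R, (∀ a ∈ I, d ∣ a) → d ∣ k)
    (b : R) (hb : Ideal.Quotient.mk I b ≠ 0)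
    (hcop : ∀ d : R, d ∣ b → d ∣ k → IsUnit d) :
    (∃ r δ : R, Ideal.Quotient.mk I (r * δ) = Ideal.Quotient.mk I b ∧
        (∀ d : R, d ∣ r → d ∣ k → IsUnit d) ∧ (δ = 0 ∨ δ ∣ k) ∧
        IsUnit (Ideal.Quotient.mk I r)) ↔
      IsUnit (Ideal.Quotient.mk I b) := by
  constructor
  · rintro ⟨r, δ, heq, -, hδ | hδk, hu⟩
    · exact absurd (heq ▸ hb) (by simp [hδ])
    · have hmem : r * δ - b ∈ I := Ideal.Quotient.eq.mp heq
      have hkd : k ∣ r * δ - b := hk.1 _ hmem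
      have hδb : δ ∣ b := by
        have h1 : δ ∣ r * δ - b := hδk.trans hkd
        have h2 : δ ∣ r * δ := Dvd.intro_left r rfl
        have := dvd_sub h2 h1
        simpa using this
      have hδu : IsUnit δ := hcop δ hδb hδk
      have : IsUnit (Ideal.Quotient.mk I (r * δ)) := by
        rw [map_mul]
        exact hu.mul (hδu.map _)
      rwa [heq] at this
  · intro h
    exact ⟨b, 1, by simp, hcop, Or.inr (one_dvd k), h⟩
end

section
/- Let R be a UFD, I a nonzero ideal with k = gcd(I) ≠ 0 a nonunit, and let b̂ ∈ R/I be a nonzero principal element. Then either the image of the relative prime part r is invertible in R/I for every I-pre-image r·δ of b̂, or this image is invertible for no I-pre-image of b̂. -/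
/-!
An `I`-pre-image `r * d` of `b̂` has `d` associated to `δ = gcd(b, k)`, so after absorbing a unit
into `r`, two pre-images `r * δ` and `r₀ * δ` satisfy `δ * (r - r₀) ∈ I`. Since `k ∣ δ * (r - r₀)`
we get `k' ∣ r - r₀`, and as every prime factor of `k` divides `k'`, some power of `k'` is a
multiple of `k`; this makes `r - r₀` nilpotent modulo `I`. Hence `r` is a unit modulo `I`
exactly when `r₀` is.
-/

open UniqueFactorizationMonoid

theorem UniqueFactorizationMonoid.exists_dvd_pow_of_forall_prime_dvd {α : Type*}
    [CommMonoidWithZero α] [UniqueFactorizationMonoid α] {a b : α} (ha : a ≠ 0)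
    (h : ∀ p : α, Prime p → p ∣ a → p ∣ b) : ∃ n : ℕ, a ∣ b ^ n := by
  induction a using induction_on_prime with
  | h₁ => exact absurd rfl ha
  | h₂ x hx => exact ⟨0, hx.dvd⟩
  | h₃ a p ha₀ hp ih =>
    obtain ⟨n, hn⟩ := ih ha₀ fun q hq hqa => h q hq (hqa.mul_left p)
    exact ⟨n + 1, pow_succ' b n ▸ mul_dvd_mul (h p hp (dvd_mul_right p a)) hn⟩

section Quotient

variable {R : Type*} [CommRing R] [IsDomain R] {I : Ideal R}

theorem isNilpotent_mk_of_mul_mem {δ k' z : R} {n : ℕ} (hI : ∀ a ∈ I, δ * k' ∣ a)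
    (hδ : δ ≠ 0) (hn : δ * k' ∣ k' ^ n) (hz : δ * z ∈ I) :
    IsNilpotent (Ideal.Quotient.mk I z) := by
  obtain ⟨y, rfl⟩ : k' ∣ z := (mul_dvd_mul_iff_left hδ).1 (hI _ hz)
  obtain ⟨w, hw⟩ := hn
  have hpow : (k' * y) ^ (n + 1) = δ * (k' * y) * (k' * w * y ^ n) := by
    rw [mul_pow, pow_succ, hw]; ring
  refine ⟨n + 1, ?_⟩
  rw [← map_pow, Ideal.Quotient.eq_zero_iff_mem, hpow]
  exact I.mul_mem_right _ hz

theorem isUnit_mk_of_mk_mul_eq {δ k' x x₀ : R} {n : ℕ} (hI : ∀ a ∈ I, δ * k' ∣ a)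
    (hδ : δ ≠ 0) (hn : δ * k' ∣ k' ^ n)
    (hx : Ideal.Quotient.mk I (δ * x) = Ideal.Quotient.mk I (δ * x₀))
    (hx₀ : IsUnit (Ideal.Quotient.mk I x₀)) : IsUnit (Ideal.Quotient.mk I x) := by
  have hnil : IsNilpotent (Ideal.Quotient.mk I (x - x₀)) :=
    isNilpotent_mk_of_mul_mem hI hδ hn (by rw [mul_sub]; exact Ideal.Quotient.eq.1 hx)
  simpa using hnil.isUnit_add_left_of_commute hx₀ (Commute.all _ _)

theorem associated_of_mk_mul_eq [UniqueFactorizationMonoid R] {k b δ r d : R}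
    (hI : ∀ a ∈ I, k ∣ a) (hb : Ideal.Quotient.mk I b ≠ 0)
    (hδ : δ ∣ b ∧ δ ∣ k ∧ ∀ e : R, e ∣ b → e ∣ k → e ∣ δ)
    (hrd : Ideal.Quotient.mk I (r * d) = Ideal.Quotient.mk I b)
    (hr : IsRelPrime r k) (hd : d = 0 ∨ d ∣ k) : Associated δ d := by
  have hdk : d ∣ k := hd.resolve_left fun hd₀ => hb (by rw [← hrd, hd₀, mul_zero, map_zero])
  have hk : k ∣ r * d - b := hI _ (Ideal.Quotient.eq.1 hrd)
  have hdb : d ∣ b := by simpa using dvd_sub (dvd_mul_left d r) (hdk.trans hk)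
  have hδrd : δ ∣ r * d := by simpa using dvd_add (hδ.2.1.trans hk) hδ.1
  have hδr : IsRelPrime δ r := (hr.of_dvd_right hδ.2.1).symm
  exact associated_of_dvd_dvd (hδr.dvd_of_dvd_mul_left hδrd) (hδ.2.2 d hdb hdk)

end Quotient

theorem stmt12_general {R : Type*} [CommRing R] [IsDomain R] [UniqueFactorizationMonoid R]
    (I : Ideal R) (k : R) (hk0 : k ≠ 0)
    (hk : (∀ a ∈ I, k ∣ a) ∧ ∀ d : R, (∀ a ∈ I, d ∣ a) → d ∣ k)
    (b : R) (hb : Ideal.Quotient.mk I b ≠ 0)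
    (δ k' : R)
    (hδgcd : δ ∣ b ∧ δ ∣ k ∧ ∀ d : R, d ∣ b → d ∣ k → d ∣ δ)
    (hkk' : k = δ * k')
    (hprincipal : ∀ p : R, Prime p → p ∣ k → p ∣ k') :
    (∀ r d : R, Ideal.Quotient.mk I (r * d) = Ideal.Quotient.mk I b →
        (∀ e : R, e ∣ r → e ∣ k → IsUnit e) → (d = 0 ∨ d ∣ k) →
        IsUnit (Ideal.Quotient.mk I r)) ∨
    (∀ r d : R, Ideal.Quotient.mk I (r * d) = Ideal.Quotient.mk I b →
        (∀ e : R, e ∣ r → e ∣ k → IsUnit e) → (d = 0 ∨ d ∣ k) →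
        ¬ IsUnit (Ideal.Quotient.mk I r)) := by
  obtain ⟨n, hn⟩ := exists_dvd_pow_of_forall_prime_dvd hk0 hprincipal
  subst hkk'
  have hδ : δ ≠ 0 := left_ne_zero_of_mul hk0
  rw [or_iff_not_imp_right]
  push Not
  rintro ⟨r₀, d₀, hrd₀, hr₀, hd₀, hunit₀⟩ r d hrd hr hd
  obtain ⟨u₀, rfl⟩ := associated_of_mk_mul_eq hk.1 hb hδgcd hrd₀ (fun e => hr₀ e) hd₀
  obtain ⟨u, rfl⟩ := associated_of_mk_mul_eq hk.1 hb hδgcd hrd (fun e => hr e) hd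
  have hmk : Ideal.Quotient.mk I (δ * (r * u)) = Ideal.Quotient.mk I (δ * (r₀ * u₀)) := by
    rw [mul_left_comm, hrd, ← hrd₀, mul_left_comm]
  have hunit : IsUnit (Ideal.Quotient.mk I (r * u)) :=
    isUnit_mk_of_mk_mul_eq hk.1 hδ hn hmk
      (by rw [map_mul]; exact hunit₀.mul (u₀.isUnit.map _))
  exact isUnit_of_mul_isUnit_left (by rwa [← map_mul])

theorem stmt12 {R : Type*} [CommRing R] [IsDomain R] [UniqueFactorizationMonoid R]
    (I : Ideal R) (hI : I ≠ ⊥) (k : R) (hk0 : k ≠ 0) (hku : ¬ IsUnit k)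
    (hk : (∀ a ∈ I, k ∣ a) ∧ ∀ d : R, (∀ a ∈ I, d ∣ a) → d ∣ k)
    (b : R) (hb : Ideal.Quotient.mk I b ≠ 0)
    (δ k' : R)
    (hδgcd : δ ∣ b ∧ δ ∣ k ∧ ∀ d : R, d ∣ b → d ∣ k → d ∣ δ)
    (hkk' : k = δ * k')
    (hprincipal : ∀ p : R, Prime p → p ∣ k → p ∣ k') :
    (∀ r d : R, Ideal.Quotient.mk I (r * d) = Ideal.Quotient.mk I b →
        (∀ e : R, e ∣ r → e ∣ k → IsUnit e) → (d = 0 ∨ d ∣ k) →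
        IsUnit (Ideal.Quotient.mk I r)) ∨
    (∀ r d : R, Ideal.Quotient.mk I (r * d) = Ideal.Quotient.mk I b →
        (∀ e : R, e ∣ r → e ∣ k → IsUnit e) → (d = 0 ∨ d ∣ k) →
        ¬ IsUnit (Ideal.Quotient.mk I r)) :=
  stmt12_general I k hk0 hk b hb δ k' hδgcd hkk' hprincipal
end

section
/- Let R = ℤ[x] and I = ⟨2x⟩. Then 1·x and 3·x are both I-pre-images of the class of x in ℤ[x]/⟨2x⟩ (with relative prime parts 1 and 3), the class of 1 is invertible in ℤ[x]/⟨2x⟩, but the class of 3 is not invertible in ℤ[x]/⟨2x⟩. -/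
/-!
`3x ≡ x` modulo `2x` since the difference is `2x`. A common divisor of `3` and `2x` divides the
nonzero constant `3`, so it is a constant `c`; then `c` divides `3` and the `x`-coefficient `2`,
hence is a unit. Yet `3` is no unit modulo `2x`: evaluation at `0` kills `2x` and sends `3` to a
non-unit of `ℤ`.
-/

open Polynomial

theorem Polynomial.isRelPrime_C_C_mul_X {R : Type*} [CommSemiring R] [NoZeroDivisors R]
    {a b : R} (ha : a ≠ 0) (hab : IsRelPrime a b) : IsRelPrime (C a) (C b * X) := by
  intro d hda hdb
  have hd : d = C (d.coeff 0) := eq_C_of_natDegree_le_zero <|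
    (natDegree_le_of_dvd hda (C_ne_zero.mpr ha)).trans_eq (natDegree_C a)
  rw [hd] at hda hdb ⊢
  have hea : d.coeff 0 ∣ a := by simpa using (C_dvd_iff_dvd_coeff _ _).mp hda 0
  have heb : d.coeff 0 ∣ b := by simpa using (C_dvd_iff_dvd_coeff _ _).mp hdb 1
  exact isUnit_C.mpr (hab hea heb)

theorem Ideal.Quotient.isUnit_of_isUnit_mk {R S : Type*} [Ring R] [Semiring S]
    {I : Ideal R} [I.IsTwoSided] {f : R →+* S} (hf : I ≤ RingHom.ker f) {r : R}
    (hr : IsUnit (Ideal.Quotient.mk I r)) : IsUnit (f r) :=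
  hr.map (Ideal.Quotient.lift I f fun _ ha ↦ hf ha)

theorem stmt13 :
    (Ideal.Quotient.mk (Ideal.span {(2 * Polynomial.X : Polynomial ℤ)})
        ((1 : Polynomial ℤ) * Polynomial.X) =
        Ideal.Quotient.mk (Ideal.span {(2 * Polynomial.X : Polynomial ℤ)}) Polynomial.X ∧
      (∀ d : Polynomial ℤ, d ∣ (1 : Polynomial ℤ) →
        d ∣ (2 * Polynomial.X : Polynomial ℤ) → IsUnit d) ∧
      (Polynomial.X : Polynomial ℤ) ∣ 2 * Polynomial.X) ∧
    (Ideal.Quotient.mk (Ideal.span {(2 * Polynomial.X : Polynomial ℤ)})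
        ((3 : Polynomial ℤ) * Polynomial.X) =
        Ideal.Quotient.mk (Ideal.span {(2 * Polynomial.X : Polynomial ℤ)}) Polynomial.X ∧
      (∀ d : Polynomial ℤ, d ∣ (3 : Polynomial ℤ) →
        d ∣ (2 * Polynomial.X : Polynomial ℤ) → IsUnit d) ∧
      (Polynomial.X : Polynomial ℤ) ∣ 2 * Polynomial.X) ∧
    IsUnit (Ideal.Quotient.mk (Ideal.span {(2 * Polynomial.X : Polynomial ℤ)})
      (1 : Polynomial ℤ)) ∧
    ¬ IsUnit (Ideal.Quotient.mk (Ideal.span {(2 * Polynomial.X : Polynomial ℤ)})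
      (3 : Polynomial ℤ)) := by
  have hX : (X : ℤ[X]) ∣ 2 * X := dvd_mul_left X 2
  have hthree : Ideal.Quotient.mk (Ideal.span {(2 * X : ℤ[X])}) (3 * X) =
      Ideal.Quotient.mk _ X := by
    rw [Ideal.Quotient.eq, Ideal.mem_span_singleton]
    exact ⟨1, by ring⟩
  have hrel : IsRelPrime (3 : ℤ[X]) (2 * X) := by
    have hcop : IsCoprime (3 : ℤ) 2 := Int.isCoprime_iff_gcd_eq_one.mpr rfl
    have := isRelPrime_C_C_mul_X three_ne_zero hcop.isRelPrime
    rwa [C_ofNat, C_ofNat] at this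
  have hker : Ideal.span {(2 * X : ℤ[X])} ≤ RingHom.ker (constantCoeff (R := ℤ)) := by
    rw [Ideal.span_singleton_le_iff_mem, RingHom.mem_ker]
    simp
  refine ⟨⟨by rw [one_mul], fun _ h1 _ ↦ isUnit_of_dvd_one h1, hX⟩,
    ⟨hthree, fun _ ↦ @hrel _, hX⟩, isUnit_one, fun h ↦ ?_⟩
  have := Ideal.Quotient.isUnit_of_isUnit_mk hker h
  norm_num [Int.isUnit_iff] at this
end

section
/- Let R be a UFD, I a nonzero ideal with k = gcd(I) ≠ 0 a nonzero nonunit. If b̂ ∈ R/I has a pre-image of the form b' + 1 where the class of b' is q-principal and the class of b'·k lies in I (i.e., b'k ∈ I), then b̂ is invertible in R/I. -/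
lemma aux_pow_dvd {R : Type*} [CommRing R] [IsDomain R] [UniqueFactorizationMonoid R]
    (b : R) : ∀ k : R, k ≠ 0 → (∀ p : R, Prime p → p ∣ k → p ∣ b) → ∃ N, k ∣ b ^ N := by
  intro k
  induction k using UniqueFactorizationMonoid.induction_on_prime with
  | h₁ => intro h _; exact absurd rfl h
  | h₂ u hu => intro _ _; exact ⟨0, hu.dvd⟩
  | h₃ a p ha hp ih =>
    intro _ hdvd
    obtain ⟨N, hN⟩ := ih ha fun q hq hqa => hdvd q hq (Dvd.dvd.mul_left hqa p)
    exact ⟨N + 1, by rw [pow_succ, mul_comm (b ^ N) b]; exact mul_dvd_mul (hdvd p hp (dvd_mul_right p a)) hN⟩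

theorem stmt14 {R : Type*} [CommRing R] [IsDomain R] [UniqueFactorizationMonoid R]
    (I : Ideal R) (hI : I ≠ ⊥) (k : R) (hk0 : k ≠ 0) (hku : ¬ IsUnit k)
    (hk : (∀ a ∈ I, k ∣ a) ∧ ∀ d : R, (∀ a ∈ I, d ∣ a) → d ∣ k)
    (b' δ k' : R)
    (hδgcd : δ ∣ b' ∧ δ ∣ k ∧ ∀ d : R, d ∣ b' → d ∣ k → d ∣ δ)
    (hkk' : k = δ * k')
    (hq : ∀ p : R, Prime p → p ∣ k → p ∣ δ ∧ p ∣ k')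
    (hb'k : b' * k ∈ I) :
    IsUnit (Ideal.Quotient.mk I (b' + 1)) := by
  obtain ⟨N, hN⟩ := aux_pow_dvd b' k hk0
    (fun p hp hpk => dvd_trans (hq p hp hpk).1 hδgcd.1)
  have hmem : b' ^ (N + 1) ∈ I := by
    obtain ⟨t, ht⟩ := hN
    have : b' ^ (N + 1) = b' * k * t := by rw [pow_succ, ht]; ring
    rw [this]
    exact I.mul_mem_right t hb'k
  have hnil : IsNilpotent (Ideal.Quotient.mk I b') := by
    refine ⟨N + 1, ?_⟩
    rw [← map_pow, Ideal.Quotient.eq_zero_iff_mem]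
    exact hmem
  have h2 := hnil.isUnit_one_add
  have : (Ideal.Quotient.mk I) (b' + 1) = 1 + (Ideal.Quotient.mk I) b' := by
    rw [map_add, map_one, add_comm]
  rwa [this]
end

section
/- Let R be a PID and I a nonzero ideal of R. Then every matrix in M_2(R/I) is an I-matrix. -/
theorem stmt16 {R : Type*} [CommRing R] [IsDomain R] [IsPrincipalIdealRing R]
    (I : Ideal R) (hI : I ≠ ⊥) (k : R) (hk : I = Ideal.span {k})
    (ehat fhat ghat hhat : R ⧸ I) :
    ∃ t : R, t ∣ k ∧
      (Ideal.span {ehat - hhat, fhat} = Ideal.span {Ideal.Quotient.mk I t} ∨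
       Ideal.span {ehat - hhat, ghat} = Ideal.span {Ideal.Quotient.mk I t} ∨
       Ideal.span {fhat, ghat} = Ideal.span {Ideal.Quotient.mk I t}) := by
  obtain ⟨a, ha⟩ := Ideal.Quotient.mk_surjective (ehat - hhat)
  obtain ⟨b, hb⟩ := Ideal.Quotient.mk_surjective fhat
  obtain ⟨t, ht⟩ := (IsPrincipalIdealRing.principal (Ideal.span {a, b, k})).principal
  rw [Ideal.submodule_span_eq] at ht
  have hk0 : Ideal.Quotient.mk I k = 0 :=
    Ideal.Quotient.eq_zero_iff_mem.mpr (hk ▸ Ideal.subset_span rfl)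
  refine ⟨t, ?_, Or.inl ?_⟩
  · rw [← Ideal.mem_span_singleton]
    exact ht ▸ Ideal.subset_span (by simp)
  · have hmap : Ideal.map (Ideal.Quotient.mk I) (Ideal.span {a, b, k})
        = Ideal.span {Ideal.Quotient.mk I t} := by
      rw [ht, Ideal.map_span]; simp
    rw [← hmap, Ideal.map_span]
    simp only [Set.image_insert_eq, Set.image_singleton, ha, hb, hk0]
    simp [Ideal.span_insert, Ideal.span_singleton_eq_bot.mpr rfl]
end

section
/- Let R be a UFD, I a nonzero ideal with k = gcd(I) ≠ 0, and â, b̂ ∈ R/I. If the ideal ⟨â, b̂⟩ of R/I is generated by the class of t ∈ R with t | k, then t is a gcd of a, b, and k in R, where a and b are any pre-images of â and b̂. -/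
theorem stmt17 {R : Type*} [CommRing R] [IsDomain R] [UniqueFactorizationMonoid R]
    (I : Ideal R) (hI : I ≠ ⊥) (k : R) (hk0 : k ≠ 0)
    (hk : (∀ a ∈ I, k ∣ a) ∧ ∀ d : R, (∀ a ∈ I, d ∣ a) → d ∣ k)
    (a b t : R) (ht : t ∣ k)
    (hspan : Ideal.span {Ideal.Quotient.mk I a, Ideal.Quotient.mk I b} =
      Ideal.span {Ideal.Quotient.mk I t}) :
    t ∣ a ∧ t ∣ b ∧ t ∣ k ∧ ∀ d : R, d ∣ a → d ∣ b → d ∣ k → d ∣ t := by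
  have key : ∀ x : R, Ideal.Quotient.mk I x ∈
      Ideal.span {Ideal.Quotient.mk I t} → t ∣ x := by
    intro x hx
    rw [Ideal.mem_span_singleton] at hx
    obtain ⟨c, hc⟩ := hx
    obtain ⟨c', rfl⟩ := Ideal.Quotient.mk_surjective c
    have hmem : x - t * c' ∈ I := by
      rw [← Ideal.Quotient.eq_zero_iff_mem]
      simp only [map_sub, map_mul, hc]
      ring
    have hdvd : k ∣ x - t * c' := hk.1 _ hmem
    have : t ∣ x - t * c' := ht.trans hdvd
    have := dvd_add this (Dvd.intro c' rfl)
    simpa using this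
  refine ⟨?_, ?_, ht, ?_⟩
  · exact key a (hspan ▸ Ideal.subset_span (by simp))
  · exact key b (hspan ▸ Ideal.subset_span (by simp))
  · intro d hda hdb hdk
    have hmem : Ideal.Quotient.mk I t ∈
        Ideal.span {Ideal.Quotient.mk I a, Ideal.Quotient.mk I b} := by
      rw [hspan]; exact Ideal.subset_span (by simp)
    rw [Ideal.mem_span_pair] at hmem
    obtain ⟨u, v, huv⟩ := hmem
    obtain ⟨u', rfl⟩ := Ideal.Quotient.mk_surjective u
    obtain ⟨v', rfl⟩ := Ideal.Quotient.mk_surjective v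
    have hmem2 : u' * a + v' * b - t ∈ I := by
      rw [← Ideal.Quotient.eq_zero_iff_mem]
      simp only [map_sub, map_add, map_mul, huv]
      ring
    have h1 : d ∣ u' * a + v' * b - t := hdk.trans (hk.1 _ hmem2)
    have h2 : d ∣ u' * a + v' * b := dvd_add (hda.mul_left _) (hdb.mul_left _)
    have := dvd_sub h2 h1
    simpa using this
end

section
/- Let R be a UFD, I a nonzero ideal of R with k = gcd(I) ≠ 0, and let B̂ = [[ê,f̂],[ĝ,ĥ]] ∈ M_2(R/I) be an I-matrix with pre-image B ∈ M_2(R). Then the centralizer of B̂ in M_2(R/I) equals Θ(Cen(B)) + S, where Θ is the induced map M_2(R) → M_2(R/I), Cen(B) is the centralizer of B in M_2(R), and S is the set of matrices [[x₁₁,x₁₂],[x₂₁,x₂₂]] with x₁₁ = 0, x₁₂ ∈ ann(ĝ) ∩ ann(ê−ĥ), x₂₁ ∈ ann(f̂) ∩ ann(ê−ĥ), and x₂₂ ∈ ann(f̂) ∩ ann(ĝ). -/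
/-!
Encode a 2 × 2 matrix `M` by the triple `(M₀₀ - M₁₁, M₀₁, M₁₀)`; two matrices commute iff their
triples are parallel (`vᵢ wⱼ = vⱼ wᵢ`). Let `v` be the triple of `B` and `w` that of an `Â`
commuting with `B̂`, and write `t̂ = Σ aᵢ v̂ᵢ`; then `ε = Σ aᵢ wᵢ` satisfies `v̂ᵢ ε = t̂ wᵢ`.
Since `I ⊆ (k) ⊆ (t)`, an element of `R` whose image lies in `(t̂)` is divisible by `t`, so for a
lift `e` of `ε` the elements `Wᵢ = e vᵢ / t` form a triple parallel to `v` with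
`t̂ (wᵢ - Ŵᵢ) = 0`. The two entries of `v̂` generating `(t̂)` are multiples of `t̂`, hence kill
every `dₖ = wₖ - Ŵₖ`, and `v̂ᵢ dₖ = v̂ₖ dᵢ` passes this on to the third entry when `i ≠ k`.
A matrix with triple `W` whose `(0,0)` entry lifts `Â₀₀` commutes with `B`, and `Â` minus its
image lies in `S`.
-/

open Ideal.Quotient in
theorem dvd_of_mk_mem_span_singleton {R : Type*} [CommRing R] {I : Ideal R} {t x : R}
    (hI : I ≤ Ideal.span {t}) (hx : mk I x ∈ Ideal.span {mk I t}) : t ∣ x := by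
  obtain ⟨a, ha⟩ := Ideal.mem_span_singleton'.mp hx
  obtain ⟨a, rfl⟩ := mk_surjective a
  have hmem : a * t - x ∈ I := Ideal.Quotient.eq.mp (by rw [map_mul, ha])
  exact (dvd_sub_right (dvd_mul_left t a)).mp (Ideal.mem_span_singleton.mp (hI hmem))

def Parallel {A ι : Type*} [Mul A] (v w : ι → A) : Prop :=
  ∀ i j, v i * w j = v j * w i

namespace Parallel

variable {A ι : Type*}

theorem of_mul_eq_zero [MulZeroClass A] {v w : ι → A} (h : ∀ i k, i ≠ k → v i * w k = 0) :
    Parallel v w := by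
  intro i j
  by_cases hij : i = j
  · rw [hij]
  · rw [h i j hij, h j i (Ne.symm hij)]

theorem map [Mul A] {B F : Type*} [Mul B] [FunLike F A B] [MulHomClass F A B] {v w : ι → A}
    (h : Parallel v w) (f : F) : Parallel (fun i => f (v i)) (fun i => f (w i)) := fun i j => by
  rw [← map_mul, ← map_mul, h]

theorem sub [NonUnitalNonAssocRing A] {v w w' : ι → A} (h : Parallel v w) (h' : Parallel v w') :
    Parallel v (w - w') := fun i j => by
  simp only [Pi.sub_apply, mul_sub, h i j, h' i j]

theorem exists_mul_eq_mul [CommSemiring A] [Fintype ι] {v w : ι → A} (h : Parallel v w) {τ : A}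
    (hτ : τ ∈ Ideal.span (Set.range v)) : ∃ ε, ∀ k, v k * ε = τ * w k := by
  obtain ⟨c, rfl⟩ := Ideal.mem_span_range_iff_exists_fun.mp hτ
  refine ⟨∑ i, c i * w i, fun k => ?_⟩
  simp only [Finset.mul_sum, Finset.sum_mul]
  exact Finset.sum_congr rfl fun i _ => by rw [mul_left_comm, h k i]; ring

theorem mul_eq_zero_of_ne [CommMonoidWithZero A] {v w : Fin 3 → A} (h : Parallel v w) {τ : A}
    (hτ : ∀ k, τ * w k = 0) {i₀ j₀ : Fin 3} (hij : i₀ ≠ j₀) (hi₀ : τ ∣ v i₀) (hj₀ : τ ∣ v j₀)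
    {i k : Fin 3} (hik : i ≠ k) : v i * w k = 0 := by
  have hdvd : ∀ l, τ ∣ v l → ∀ k, v l * w k = 0 := by
    rintro l ⟨a, ha⟩ k
    rw [ha, mul_right_comm, hτ, zero_mul]
  -- two pairs of distinct indices in `Fin 3` share an index
  have : i = i₀ ∨ i = j₀ ∨ k = i₀ ∨ k = j₀ := by omega
  rcases this with rfl | rfl | rfl | rfl
  · exact hdvd _ hi₀ k
  · exact hdvd _ hj₀ k
  · rw [h, hdvd _ hi₀ i]
  · rw [h, hdvd _ hj₀ i]

open Ideal.Quotient

variable {R : Type*} [CommRing R] [IsDomain R] {I : Ideal R} {t : R}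

theorem exists_lift [Fintype ι] (ht : t ≠ 0) (hI : I ≤ Ideal.span {t}) {v : ι → R}
    {w : ι → R ⧸ I} (h : Parallel (fun i => mk I (v i)) w)
    (hτ : mk I t ∈ Ideal.span (Set.range fun i => mk I (v i))) :
    ∃ W : ι → R, Parallel v W ∧ ∀ k, mk I t * (w k - mk I (W k)) = 0 := by
  obtain ⟨ε, hε⟩ := h.exists_mul_eq_mul hτ
  obtain ⟨e, rfl⟩ := mk_surjective ε
  have hdvd : ∀ k, t ∣ e * v k := fun k => dvd_of_mk_mem_span_singleton hI <| by
    rw [map_mul, mul_comm, hε]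
    exact Ideal.mul_mem_right _ _ (Ideal.mem_span_singleton_self _)
  choose W hW using hdvd
  refine ⟨W, fun i j => mul_left_cancel₀ ht ?_, fun k => ?_⟩
  · linear_combination v j * hW i - v i * hW j
  · have hWk := congrArg (mk I) (hW k)
    rw [map_mul, map_mul] at hWk
    linear_combination hWk - hε k

theorem exists_lift_of_span_pair (ht : t ≠ 0) (hI : I ≤ Ideal.span {t}) {v : Fin 3 → R}
    {w : Fin 3 → R ⧸ I} (h : Parallel (fun i => mk I (v i)) w) {i₀ j₀ : Fin 3} (hij : i₀ ≠ j₀)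
    (hspan : Ideal.span {mk I (v i₀), mk I (v j₀)} = Ideal.span {mk I t}) :
    ∃ W : Fin 3 → R, Parallel v W ∧ ∀ i k, i ≠ k → mk I (v i) * (w k - mk I (W k)) = 0 := by
  have hτ : mk I t ∈ Ideal.span (Set.range fun i => mk I (v i)) := by
    refine Ideal.span_mono ?_ (hspan ▸ Ideal.mem_span_singleton_self _)
    rintro _ (rfl | rfl) <;> exact ⟨_, rfl⟩
  have hdvd : ∀ l ∈ ({i₀, j₀} : Set (Fin 3)), mk I t ∣ mk I (v l) := fun l hl =>
    Ideal.mem_span_singleton.mp (hspan ▸ Ideal.subset_span (by rcases hl with rfl | rfl <;> simp))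
  obtain ⟨W, hW, htW⟩ := h.exists_lift ht hI hτ
  exact ⟨W, hW, fun i k hik => (h.sub (hW.map (mk I))).mul_eq_zero_of_ne htW hij
    (hdvd _ (by simp)) (hdvd _ (by simp)) hik⟩

end Parallel

theorem parallel_fin_three_iff {A : Type*} [Mul A] {v w : Fin 3 → A} :
    Parallel v w ↔ v 0 * w 1 = v 1 * w 0 ∧ v 0 * w 2 = v 2 * w 0 ∧ v 1 * w 2 = v 2 * w 1 := by
  refine ⟨fun h => ⟨h 0 1, h 0 2, h 1 2⟩, fun ⟨h01, h02, h12⟩ i j => ?_⟩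
  fin_cases i <;> fin_cases j <;> first | rfl | assumption | exact Eq.symm ‹_›

def commTriple {A : Type*} [Sub A] (M : Matrix (Fin 2) (Fin 2) A) : Fin 3 → A :=
  ![M 0 0 - M 1 1, M 0 1, M 1 0]

theorem commute_iff_parallel_commTriple {A : Type*} [CommRing A]
    {M N : Matrix (Fin 2) (Fin 2) A} : M * N = N * M ↔ Parallel (commTriple N) (commTriple M) := by
  simp only [← Matrix.ext_iff, Matrix.mul_apply, Fin.sum_univ_two, Fin.isValue, Fin.forall_fin_two,
    commTriple, parallel_fin_three_iff, Matrix.cons_val_zero, Matrix.cons_val_one, Matrix.cons_val]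
  constructor
  · rintro ⟨⟨h00, h01⟩, h10, -⟩
    exact ⟨by linear_combination -h01, by linear_combination h10, by linear_combination -h00⟩
  · rintro ⟨h01, h10, h00⟩
    exact ⟨⟨by linear_combination -h00, by linear_combination -h01⟩, by linear_combination h10,
      by linear_combination h00⟩

theorem commTriple_map {A B : Type*} [Ring A] [Ring B] (f : A →+* B)
    (M : Matrix (Fin 2) (Fin 2) A) : commTriple (M.map f) = fun i => f (commTriple M i) := by
  ext i
  fin_cases i <;> simp [commTriple]

theorem commTriple_sub {A : Type*} [AddCommGroup A] (M N : Matrix (Fin 2) (Fin 2) A) :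
    commTriple (M - N) = commTriple M - commTriple N := by
  ext i
  fin_cases i <;> simp [commTriple]; abel

theorem forall_ne_commTriple_mul_eq_zero_iff {A : Type*} [Ring A]
    {N D : Matrix (Fin 2) (Fin 2) A} (hD : D 0 0 = 0) :
    (∀ i k, i ≠ k → commTriple N i * commTriple D k = 0) ↔
      N 1 0 * D 0 1 = 0 ∧ (N 0 0 - N 1 1) * D 0 1 = 0 ∧ N 0 1 * D 1 0 = 0 ∧
        (N 0 0 - N 1 1) * D 1 0 = 0 ∧ N 0 1 * D 1 1 = 0 ∧ N 1 0 * D 1 1 = 0 := by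
  constructor
  · intro h
    have h10 := h 1 0 (by decide)
    have h20 := h 2 0 (by decide)
    simp only [commTriple, Fin.isValue, Matrix.cons_val_one, Matrix.cons_val_zero, hD, zero_sub,
      mul_neg, neg_eq_zero, Matrix.cons_val] at h10 h20
    exact ⟨h 2 1 (by decide), h 0 1 (by decide), h 1 2 (by decide), h 0 2 (by decide), h10, h20⟩
  · rintro h i k hik
    fin_cases i <;> fin_cases k <;> simp_all [commTriple]

open Ideal.Quotient in
theorem exists_commute_add_of_commute_map {R : Type*} [CommRing R] [IsDomain R] {I : Ideal R}
    {t : R} (ht : t ≠ 0) (hI : I ≤ Ideal.span {t}) {B : Matrix (Fin 2) (Fin 2) R}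
    {i₀ j₀ : Fin 3} (hij : i₀ ≠ j₀)
    (hspan : Ideal.span {mk I (commTriple B i₀), mk I (commTriple B j₀)} = Ideal.span {mk I t})
    {A : Matrix (Fin 2) (Fin 2) (R ⧸ I)} (hA : A * B.map (mk I) = B.map (mk I) * A) :
    ∃ C : Matrix (Fin 2) (Fin 2) R, C * B = B * C ∧ ∃ D : Matrix (Fin 2) (Fin 2) (R ⧸ I),
      D 0 0 = 0 ∧ (∀ i k, i ≠ k → commTriple (B.map (mk I)) i * commTriple D k = 0) ∧
      A = C.map (mk I) + D := by
  rw [commute_iff_parallel_commTriple, commTriple_map] at hA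
  obtain ⟨W, hW, hann⟩ := hA.exists_lift_of_span_pair ht hI hij hspan
  obtain ⟨x, hx⟩ := mk_surjective (A 0 0)
  let C : Matrix (Fin 2) (Fin 2) R := !![x, W 1; W 2, x - W 0]
  have hC : commTriple C = W := by ext i; fin_cases i <;> simp [C, commTriple]
  refine ⟨C, commute_iff_parallel_commTriple.mpr (hC ▸ hW), A - C.map (mk I), by simp [C, hx],
    ?_, by abel⟩
  simpa only [commTriple_map, commTriple_sub, hC, Pi.sub_apply] using hann

theorem stmt18_general {R : Type*} [CommRing R] [IsDomain R]
    (I : Ideal R) (k : R) (hk0 : k ≠ 0)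
    (hk : (∀ a ∈ I, k ∣ a) ∧ ∀ d : R, (∀ a ∈ I, d ∣ a) → d ∣ k)
    (B : Matrix (Fin 2) (Fin 2) R)
    (hIm : ∃ t : R, t ∣ k ∧
      (Ideal.span {Ideal.Quotient.mk I (B 0 0) - Ideal.Quotient.mk I (B 1 1),
          Ideal.Quotient.mk I (B 0 1)} = Ideal.span {Ideal.Quotient.mk I t} ∨
       Ideal.span {Ideal.Quotient.mk I (B 0 0) - Ideal.Quotient.mk I (B 1 1),
          Ideal.Quotient.mk I (B 1 0)} = Ideal.span {Ideal.Quotient.mk I t} ∨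
       Ideal.span {Ideal.Quotient.mk I (B 0 1), Ideal.Quotient.mk I (B 1 0)} =
          Ideal.span {Ideal.Quotient.mk I t})) :
    {Ahat : Matrix (Fin 2) (Fin 2) (R ⧸ I) |
        Ahat * B.map (Ideal.Quotient.mk I) = B.map (Ideal.Quotient.mk I) * Ahat} =
      {Ahat : Matrix (Fin 2) (Fin 2) (R ⧸ I) |
        ∃ C : Matrix (Fin 2) (Fin 2) R, C * B = B * C ∧
        ∃ D : Matrix (Fin 2) (Fin 2) (R ⧸ I),
          D 0 0 = 0 ∧
          Ideal.Quotient.mk I (B 1 0) * D 0 1 = 0 ∧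
          (Ideal.Quotient.mk I (B 0 0) - Ideal.Quotient.mk I (B 1 1)) * D 0 1 = 0 ∧
          Ideal.Quotient.mk I (B 0 1) * D 1 0 = 0 ∧
          (Ideal.Quotient.mk I (B 0 0) - Ideal.Quotient.mk I (B 1 1)) * D 1 0 = 0 ∧
          Ideal.Quotient.mk I (B 0 1) * D 1 1 = 0 ∧
          Ideal.Quotient.mk I (B 1 0) * D 1 1 = 0 ∧
          Ahat = C.map (Ideal.Quotient.mk I) + D} := by
  obtain ⟨t, htk, hspan⟩ := hIm
  have ht : t ≠ 0 := by rintro rfl; exact hk0 (zero_dvd_iff.mp htk)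
  have hI : I ≤ Ideal.span {t} := fun a ha => Ideal.mem_span_singleton.mpr (htk.trans (hk.1 a ha))
  ext A
  constructor
  · intro hA
    obtain ⟨i₀, j₀, hij, hspan⟩ : ∃ i₀ j₀ : Fin 3, i₀ ≠ j₀ ∧ Ideal.span
        {Ideal.Quotient.mk I (commTriple B i₀), Ideal.Quotient.mk I (commTriple B j₀)} =
          Ideal.span {Ideal.Quotient.mk I t} := by
      rcases hspan with h | h | h
      exacts [⟨0, 1, by decide, by simpa [commTriple] using h⟩,
        ⟨0, 2, by decide, by simpa [commTriple] using h⟩,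
        ⟨1, 2, by decide, by simpa [commTriple] using h⟩]
    obtain ⟨C, hC, D, hD00, hD, rfl⟩ := exists_commute_add_of_commute_map ht hI hij hspan hA
    obtain ⟨h1, h2, h3, h4, h5, h6⟩ := (forall_ne_commTriple_mul_eq_zero_iff hD00).mp hD
    exact ⟨C, hC, D, hD00, h1, h2, h3, h4, h5, h6, rfl⟩
  · rintro ⟨C, hC, D, hD00, h1, h2, h3, h4, h5, h6, rfl⟩
    have hD := (forall_ne_commTriple_mul_eq_zero_iff (N := B.map (Ideal.Quotient.mk I)) hD00).mpr
      ⟨h1, h2, h3, h4, h5, h6⟩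
    rw [Set.mem_ofPred_eq, add_mul, mul_add, ← Matrix.map_mul, ← Matrix.map_mul, hC,
      commute_iff_parallel_commTriple.mpr (Parallel.of_mul_eq_zero hD)]

theorem stmt18 {R : Type*} [CommRing R] [IsDomain R] [UniqueFactorizationMonoid R]
    (I : Ideal R) (hI : I ≠ ⊥) (k : R) (hk0 : k ≠ 0)
    (hk : (∀ a ∈ I, k ∣ a) ∧ ∀ d : R, (∀ a ∈ I, d ∣ a) → d ∣ k)
    (B : Matrix (Fin 2) (Fin 2) R)
    (hIm : ∃ t : R, t ∣ k ∧
      (Ideal.span {Ideal.Quotient.mk I (B 0 0) - Ideal.Quotient.mk I (B 1 1),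
          Ideal.Quotient.mk I (B 0 1)} = Ideal.span {Ideal.Quotient.mk I t} ∨
       Ideal.span {Ideal.Quotient.mk I (B 0 0) - Ideal.Quotient.mk I (B 1 1),
          Ideal.Quotient.mk I (B 1 0)} = Ideal.span {Ideal.Quotient.mk I t} ∨
       Ideal.span {Ideal.Quotient.mk I (B 0 1), Ideal.Quotient.mk I (B 1 0)} =
          Ideal.span {Ideal.Quotient.mk I t})) :
    {Ahat : Matrix (Fin 2) (Fin 2) (R ⧸ I) |
        Ahat * B.map (Ideal.Quotient.mk I) = B.map (Ideal.Quotient.mk I) * Ahat} =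
      {Ahat : Matrix (Fin 2) (Fin 2) (R ⧸ I) |
        ∃ C : Matrix (Fin 2) (Fin 2) R, C * B = B * C ∧
        ∃ D : Matrix (Fin 2) (Fin 2) (R ⧸ I),
          D 0 0 = 0 ∧
          Ideal.Quotient.mk I (B 1 0) * D 0 1 = 0 ∧
          (Ideal.Quotient.mk I (B 0 0) - Ideal.Quotient.mk I (B 1 1)) * D 0 1 = 0 ∧
          Ideal.Quotient.mk I (B 0 1) * D 1 0 = 0 ∧
          (Ideal.Quotient.mk I (B 0 0) - Ideal.Quotient.mk I (B 1 1)) * D 1 0 = 0 ∧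
          Ideal.Quotient.mk I (B 0 1) * D 1 1 = 0 ∧
          Ideal.Quotient.mk I (B 1 0) * D 1 1 = 0 ∧
          Ahat = C.map (Ideal.Quotient.mk I) + D} :=
  stmt18_general I k hk0 hk B hIm
end

section
/- Let R be a UFD and I an ideal such that R/I has a pair of nonzero elements d̂, d̂' with d̂·d̂' = 0, where d̂ is the image of d ∈ R. Let B = [[0,d,1],[0,0,1],[0,0,0]] ∈ M_3(R) and let Θ: M_3(R) → M_3(R/I) be the induced map. Then the matrix Â = [[d̂',0,0],[d̂',0,0],[0,0,d̂']] commutes with Θ(B), but Â does not lie in Θ(Cen_{M_3(R)}(B)) + [A_{ij}], where A_{ij} = (⋂_{k≠j} ann(θ(b_{jk}))) ∩ (⋂_{k≠i} ann(θ(b_{ki}))) ∩ ann(θ(b_{ii})−θ(b_{jj})). In particular, the containment of Proposition 2.6 (Θ(Cen(B)) + [A_{ij}] ⊆ Cen(Θ(B))) is strict for this B. -/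
theorem stmt19 {R : Type*} [CommRing R] [IsDomain R] [UniqueFactorizationMonoid R]
    (I : Ideal R) (d d' : R)
    (hd : Ideal.Quotient.mk I d ≠ 0) (hd' : Ideal.Quotient.mk I d' ≠ 0)
    (hdd' : Ideal.Quotient.mk I d * Ideal.Quotient.mk I d' = 0) :
    let θ := Ideal.Quotient.mk I
    let B : Matrix (Fin 3) (Fin 3) R := !![0, d, 1; 0, 0, 1; 0, 0, 0]
    let Ahat : Matrix (Fin 3) (Fin 3) (R ⧸ I) := !![θ d', 0, 0; θ d', 0, 0; 0, 0, θ d']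
    Ahat * B.map θ = B.map θ * Ahat ∧
    ¬ ∃ C : Matrix (Fin 3) (Fin 3) R, C * B = B * C ∧
      ∃ D : Matrix (Fin 3) (Fin 3) (R ⧸ I),
        (∀ i j : Fin 3,
          (∀ l : Fin 3, l ≠ j → θ (B j l) * D i j = 0) ∧
          (∀ l : Fin 3, l ≠ i → θ (B l i) * D i j = 0) ∧
          (θ (B i i) - θ (B j j)) * D i j = 0) ∧
        Ahat = C.map θ + D := by
  intro θ B Ahat
  have hd0 : d ≠ 0 := by
    intro h; apply hd; simp [θ, h]
  constructor
  · ext i j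
    fin_cases i <;> fin_cases j <;>
      simp [Ahat, B, θ, Matrix.mul_apply, Fin.sum_univ_three, hdd',
        mul_comm (Ideal.Quotient.mk I d') (Ideal.Quotient.mk I d), Matrix.vecHead, Matrix.vecTail]
  · rintro ⟨C, hC, D, hD, hEq⟩
    -- D 1 0 = 0, from the constraint with l = 2
    have hD10 : D 1 0 = 0 := by
      have := (hD 1 0).1 2 (by decide)
      simpa [B, θ] using this
    -- C 2 0 = 0 from entry (1,0) of the commutation relation
    have h10 := congrFun (congrFun hC 1) 0
    have hC20 : C 2 0 = 0 := by
      simpa [B, Matrix.mul_apply, Fin.sum_univ_three] using h10.symm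
    -- entry (0,0): d * C 1 0 + C 2 0 = 0
    have h00 := congrFun (congrFun hC 0) 0
    have hC10 : C 1 0 = 0 := by
      have : d * C 1 0 = 0 := by
        have := h00.symm
        simp [B, Matrix.mul_apply, Fin.sum_univ_three, hC20] at this
        simpa using this
      rcases mul_eq_zero.mp this with h | h
      · exact absurd h hd0
      · exact h
    have hE := congrFun (congrFun hEq 1) 0
    rw [Matrix.add_apply, Matrix.map_apply, hC10, hD10] at hE
    simp [Ahat, θ] at hE
    exact hd' hE
end
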